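/- arXiv:2504.01283 — 2 statements merged into one kernel-verified Lean document; each statement's English description precedes it below -/
import Mathlib

section
/- Let G be a countable group acting on S¹ by orientation-preserving homeomorphisms, with the action minimal and proximal. Then for any pair of nonempty closed intervals I, J ⊊ S¹ with nonempty interior there exists g ∈ G such that g(I) ⊆ J. If the action is furthermore topologically nonfree, then for every nontrivial interval J ⊆ S¹ there exists a ∈ G∖{e_G} with supp(a) ⊆ J. -/
open MeasureTheory Filter Topology Set

noncomputable section

/-! ## The circle `ℝ/ℤ` and group actions on it -/

/-- The circle `S¹ ≅ ℝ/ℤ`. -/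
abbrev S1 : Type := AddCircle (1 : ℝ)

instance fact_zero_lt_one' : Fact ((0 : ℝ) < 1) := ⟨one_pos⟩

/-- The canonical projection `ℝ → ℝ/ℤ`. -/
def toS1 (t : ℝ) : S1 := (t : S1)

/-- `g` acts as an orientation-preserving circle map: it admits a monotone degree-one lift. -/
def OrientPres {G : Type*} [Monoid G] [MulAction G S1] (g : G) : Prop :=
  ∃ F : ℝ → ℝ, Monotone F ∧ (∀ t, F (t + 1) = F t + 1) ∧ ∀ t : ℝ, g • toS1 t = toS1 (F t)

/-- The action of `G` on the circle is by homeomorphisms (continuity of each element suffices,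
since a group action consists of bijections with continuous inverses given by the action of
inverses). -/
def ActsByHomeos (G : Type*) [Monoid G] [MulAction G S1] : Prop :=
  ∀ g : G, Continuous fun x : S1 => g • x

/-- The action of `G` on the circle is faithful, i.e. `G` is (identified with) a subgroup of
the homeomorphism group of the circle. -/
def FaithfulAct (G : Type*) [Monoid G] [MulAction G S1] : Prop :=
  ∀ g : G, (∀ x : S1, g • x = x) → g = 1

/-- Minimality: every orbit is dense. -/
def MinimalAct (G : Type*) [Monoid G] [MulAction G S1] : Prop :=
  ∀ x : S1, Dense (MulAction.orbit G x)

/-- A closed interval (arc) of the circle: the image of a closed interval of length at most one. -/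
def IsClosedArc (I : Set S1) : Prop :=
  ∃ a b : ℝ, a ≤ b ∧ b ≤ a + 1 ∧ I = toS1 '' Set.Icc a b

/-- An interval (arc) of the circle: the image of an order-connected subset of `ℝ`. -/
def IsArc (I : Set S1) : Prop :=
  ∃ S : Set ℝ, S.OrdConnected ∧ I = toS1 '' S

/-- Proximality: every proper closed interval can be contracted to arbitrarily small diameter. -/
def ProximalAct (G : Type*) [Monoid G] [MulAction G S1] : Prop :=
  ∀ I : Set S1, IsClosedArc I → I ≠ Set.univ → ∀ ε : ℝ, 0 < ε →
    ∃ g : G, Metric.diam ((fun x : S1 => g • x) '' I) < ε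

/-- The support of a circle homeomorphism: the closure of the set of non-fixed points. -/
def homSupp {G : Type*} [Monoid G] [MulAction G S1] (g : G) : Set S1 :=
  closure {x : S1 | g • x ≠ x}

/-- Topological nonfreeness: some nontrivial element has a fixed-point set with nonempty
interior. -/
def TopNonfree (G : Type*) [Group G] [MulAction G S1] : Prop :=
  ∃ g : G, g ≠ 1 ∧ (interior {x : S1 | g • x = x}).Nonempty

/-! ## Probability measures on countable groups, entropy and random walks -/

/-- Nondegeneracy: the semigroup generated by the support of `μ` is all of `G`. -/
def Nondeg {G : Type*} [Group G] (μ : PMF G) : Prop :=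
  Subsemigroup.closure μ.support = ⊤

/-- The summand `-μ(g) log μ(g)` in the Shannon entropy. -/
def entTerm {G : Type*} (μ : PMF G) (g : G) : ℝ :=
  -((μ g).toReal * Real.log (μ g).toReal)

/-- Finiteness of the Shannon entropy `H(μ) = -∑ μ(g) log μ(g)`. -/
def FiniteShannonEntropy {G : Type*} (μ : PMF G) : Prop :=
  Summable (entTerm μ)

/-- The Shannon entropy `H(μ) = -∑ μ(g) log μ(g)`. -/
def pmfEntropy {G : Type*} (μ : PMF G) : ℝ :=
  ∑' g, entTerm μ g

/-- Convolution of two probability measures on a group. -/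
def pmfConv {G : Type*} [Mul G] (μ ν : PMF G) : PMF G :=
  μ.bind fun g => ν.map fun h => g * h

/-- Convolution powers `μ^{*n}` (with `μ^{*0} = δ_e`). -/
def pmfPow {G : Type*} [Monoid G] (μ : PMF G) : ℕ → PMF G
  | 0 => PMF.pure 1
  | n + 1 => pmfConv (pmfPow μ n) μ

/-- The lazy version `(1/2) μ + (1/2) δ_e` of `μ`. -/
def lazyPMF {G : Type*} [One G] (μ : PMF G) : PMF G :=
  (PMF.bernoulli 2⁻¹ (by norm_num)).bind fun b => if b then μ else PMF.pure 1

/-- `P` is the law on the space of trajectories `G^ℕ` of the right `μ`-random walk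
`w₀ = e`, `wₙ₊₁ = wₙ gₙ₊₁` with i.i.d. increments of law `μ`: it is the probability measure
whose cylinder probabilities are given by products of increments. -/
def IsRWMeasure {G : Type*} [Group G] [MeasurableSpace G] (μ : PMF G)
    (P : Measure (ℕ → G)) : Prop :=
  IsProbabilityMeasure P ∧
    ∀ (n : ℕ) (y : ℕ → G), y 0 = 1 →
      P {w | ∀ k ≤ n, w k = y k} = ∏ k ∈ Finset.range n, μ ((y k)⁻¹ * y (k + 1))

/-- `ν` is a `μ`-stationary measure on the circle: `ν = μ * ν`. -/
def IsStationaryS1 {G : Type*} [Monoid G] [MulAction G S1] (μ : PMF G) (ν : Measure S1) : Prop :=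
  ∀ s : Set S1, MeasurableSet s → ν s = ∑' g : G, μ g * ν ((fun x : S1 => g • x) ⁻¹' s)

/-- `ν` is the unique `μ`-stationary probability measure on the circle. -/
def IsUniqueStationaryS1 {G : Type*} [Monoid G] [MulAction G S1] (μ : PMF G)
    (ν : Measure S1) : Prop :=
  IsProbabilityMeasure ν ∧ IsStationaryS1 μ ν ∧
    ∀ ν' : Measure S1, IsProbabilityMeasure ν' → IsStationaryS1 μ ν' → ν' = ν

/-! ## μ-boundaries and the Poisson boundary -/

/-- `(X, ν)`, together with the boundary map `bnd`, is a `μ`-boundary of `G`: a probability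
space with a measurable `G`-action and a shift-invariant measurable map from the space of
trajectories of the `μ`-random walk pushing the trajectory law forward to `ν`. -/
structure IsMuBoundary {G X : Type*} [Group G] [MeasurableSpace G] [MeasurableSpace X]
    (μ : PMF G) (P : Measure (ℕ → G)) (act : G → X → X) (ν : Measure X)
    (bnd : (ℕ → G) → X) : Prop where
  isRW : IsRWMeasure μ P
  probν : IsProbabilityMeasure ν
  act_one : ∀ x, act 1 x = x
  act_mul : ∀ g h x, act (g * h) x = act g (act h x)
  measAct : ∀ g, Measurable (act g)
  measBnd : Measurable bnd
  shiftInv : ∀ᵐ w ∂P, bnd (fun n => w (n + 1)) = bnd w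
  push : Measure.map bnd P = ν

/-- `(X, ν)` is the Poisson boundary of `(G, μ)`: it is a `μ`-boundary and every `μ`-boundary
is a `G`-equivariant measurable quotient of it. -/
def IsPoissonBoundary {G : Type*} {X : Type} [Group G] [MeasurableSpace G] [MeasurableSpace X]
    (μ : PMF G) (P : Measure (ℕ → G)) (act : G → X → X) (ν : Measure X)
    (bnd : (ℕ → G) → X) : Prop :=
  IsMuBoundary μ P act ν bnd ∧
    ∀ (Y : Type) [MeasurableSpace Y] (actY : G → Y → Y) (lam : Measure Y)
      (bndY : (ℕ → G) → Y), IsMuBoundary μ P actY lam bndY →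
      ∃ π : X → Y, Measurable π ∧ Measure.map π ν = lam ∧
        (∀ g : G, ∀ᵐ x ∂ν, π (act g x) = actY g (π x)) ∧
        (∀ᵐ w ∂P, π (bnd w) = bndY w)

/-- Weak-* convergence `(wₙ)_* ν → δ_z` of the translates of `ν` along a trajectory `w` towards
the point mass at `z`. -/
def WeakStarToDirac {G : Type*} [Monoid G] [MulAction G S1] (ν : Measure S1)
    (w : ℕ → G) (z : S1) : Prop :=
  ∀ f : C(S1, ℝ), Tendsto (fun n => ∫ x, f ((w n) • x) ∂ν) atTop (𝓝 (f z))

/-! ## Disintegration and conditional entropy -/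

/-- `Pc` is the disintegration `ℙ = ∫_X ℙ^ξ dν(ξ)` of the trajectory measure `P` with respect to
the boundary map `bnd : G^ℕ → X`. -/
structure IsDisintegration {G X : Type*} [MeasurableSpace G] [MeasurableSpace X]
    (P : Measure (ℕ → G)) (ν : Measure X) (bnd : (ℕ → G) → X)
    (Pc : X → Measure (ℕ → G)) : Prop where
  meas : ∀ s : Set (ℕ → G), MeasurableSet s → Measurable fun ξ => Pc ξ s
  prob : ∀ᵐ ξ ∂ν, IsProbabilityMeasure (Pc ξ)
  fiber : ∀ᵐ ξ ∂ν, Pc ξ {w | bnd w ≠ ξ} = 0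
  total : ∀ s : Set (ℕ → G), MeasurableSet s → P s = ∫⁻ ξ, Pc ξ s ∂ν

/-- The conditional entropy `H_ξ(αₙ)` of the position of the random walk at time `n` with
respect to the conditional measure `ℙ^ξ`. -/
def condEntropyAt {G X : Type*} [MeasurableSpace G] (Pc : X → Measure (ℕ → G)) (n : ℕ)
    (ξ : X) : ℝ :=
  ∑' g : G, -(((Pc ξ) {w | w n = g}).toReal * Real.log ((Pc ξ) {w | w n = g}).toReal)

/-- The mean conditional entropy `H_𝐗(αₙ) = ∫_X H_ξ(αₙ) dν(ξ)` of the time-`n` position over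
the `μ`-boundary `(X, ν)`. -/
def meanCondEntropy {G X : Type*} [MeasurableSpace G] [MeasurableSpace X] (ν : Measure X)
    (Pc : X → Measure (ℕ → G)) (n : ℕ) : ℝ :=
  ∫ ξ, condEntropyAt Pc n ξ ∂ν

/-! ## Collections and trajectories (Erschler's method) -/

/-- A collection of length `n`: a set of times `I = {i₁ < ⋯ < i_k} ⊆ {1, …, n}` together with
prescribed increments `x_l ∈ S` for the remaining times `l ∈ {1, …, n} ∖ I` (the values of `x`
outside these times are normalised to `1`). -/
structure Collection (G : Type*) [One G] (S : Set G) (n : ℕ) where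
  I : Finset ℕ
  hI : ∀ i ∈ I, 1 ≤ i ∧ i ≤ n
  x : ℕ → G
  hx_mem : ∀ l, 1 ≤ l → l ≤ n → l ∉ I → x l ∈ S
  hx_canon : ∀ l, l = 0 ∨ n < l ∨ l ∈ I → x l = 1

/-- The set of trajectories `T^{a,b}(q)` associated with a collection `q`: trajectories starting
at the identity, with jump `x_l` at each time `l ∉ I` and jump `a` or `b` at each time of `I`
(normalised to be constant after time `n`). -/
def trajSet {G : Type*} [Group G] {S : Set G} {n : ℕ} (a b : G) (q : Collection G S n) :
    Set (ℕ → G) :=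
  {y | y 0 = 1 ∧
    (∀ l, 1 ≤ l → l ≤ n →
      (l ∈ q.I → (y l = y (l - 1) * a ∨ y l = y (l - 1) * b)) ∧
      (l ∉ q.I → y l = y (l - 1) * q.x l)) ∧
    ∀ l, n ≤ l → y l = y n}

/-- `T^{a,b}(q)` is satisfactory: distinct trajectories in it arrive at distinct group elements
at time `n`. -/
def Satisfactory {G : Type*} [Group G] {S : Set G} {n : ℕ} (a b : G)
    (q : Collection G S n) : Prop :=
  ∀ y ∈ trajSet a b q, ∀ y' ∈ trajSet a b q, y ≠ y' → y n ≠ y' n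

/-- The cylinder `[y]` of infinite trajectories agreeing with `y` up to time `n`. -/
def cylOf {G : Type*} (n : ℕ) (y : ℕ → G) : Set (ℕ → G) :=
  {w | ∀ k, 1 ≤ k → k ≤ n → w k = y k}

/-! ## Domination of intervals and good collections -/

/-- `I₁` dominates `I₂` if they are disjoint or the interior of `I₁` contains `I₂`. -/
def Dominates (I₁ I₂ : Set S1) : Prop :=
  Disjoint I₁ I₂ ∨ I₂ ⊆ interior I₁

/-- The defining property of `ξ`-good collections (without maximality): for every trajectory in
`T^{a,e}(q)` and every time `i ∈ I`, the interval `y_{i-1}(J)` dominates all earlier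
translates `y_l(J)`, and `y_i⁻¹(ξ) ∉ J`. -/
def GoodCore {G : Type*} [Group G] [MulAction G S1] {S : Set G} {n : ℕ} (a : G) (J : Set S1)
    (ξ : S1) (q : Collection G S n) : Prop :=
  ∀ y ∈ trajSet a 1 q, ∀ i ∈ q.I,
    (∀ l, l < i - 1 →
      Dominates ((fun z : S1 => y (i - 1) • z) '' J) ((fun z : S1 => y l • z) '' J)) ∧
    (y i)⁻¹ • ξ ∉ J

/-- `q` is `ξ`-good: it satisfies `GoodCore` and its set of times is maximal among subsets of
`{1, …, n}` with this property. -/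
def IsXiGood {G : Type*} [Group G] [MulAction G S1] {S : Set G} {n : ℕ} (a : G) (J : Set S1)
    (ξ : S1) (q : Collection G S n) : Prop :=
  GoodCore a J ξ q ∧
    ∀ q' : Collection G S n, q.I ⊂ q'.I → (∀ l ∉ q'.I, q'.x l = q.x l) →
      ¬ GoodCore a J ξ q'

/-! ## The counting random variables `Z` and `W` -/

/-- The random variable `Z^J_{n,s}`: the number of times `1 ≤ k ≤ ⌈n/s⌉` such that the
interval `w_{ks}(J)` dominates `w_{js}(J)` for all `0 ≤ j ≤ k - 1`. -/
def Zvar {G : Type*} [Monoid G] [MulAction G S1] (J : Set S1) (n s : ℕ) (w : ℕ → G) : ℕ :=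
  Nat.card {k : ℕ // 1 ≤ k ∧ k ≤ ⌈(n : ℝ) / (s : ℝ)⌉₊ ∧
    ∀ j < k, Dominates ((fun z : S1 => w (k * s) • z) '' J) ((fun z : S1 => w (j * s) • z) '' J)}

/-- The random variable `Wₙ`: the number of times `1 ≤ k ≤ n` such that `w_k(J)` dominates all
earlier `w_j(J)`, `w_k⁻¹(ξ(w)) ∉ J`, and the increment `g_{k+1} ∈ {a, e}`. -/
def Wvar {G : Type*} [Group G] [MulAction G S1] (J : Set S1) (a : G) (bnd : (ℕ → G) → S1)
    (n : ℕ) (w : ℕ → G) : ℕ :=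
  Nat.card {k : ℕ // 1 ≤ k ∧ k ≤ n ∧
    (∀ j < k, Dominates ((fun z : S1 => w k • z) '' J) ((fun z : S1 => w j • z) '' J)) ∧
    (w k)⁻¹ • bnd w ∉ J ∧
    ((w k)⁻¹ * w (k + 1) = a ∨ (w k)⁻¹ * w (k + 1) = 1)}

/-! ## Piecewise affine homeomorphisms, breakpoints and configurations -/

/-- `g` acts affinely (with positive slope) on the arc that is the projection of `(t₁, t₂)`. -/
def AffineOnArc {G : Type*} [Monoid G] [MulAction G S1] (g : G) (t₁ t₂ : ℝ) : Prop :=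
  ∃ a b : ℝ, 0 < a ∧ ∀ t ∈ Set.Ioo t₁ t₂, g • toS1 t = toS1 (a * t + b)

/-- `g` acts as a piecewise affine homeomorphism: there is a finite set `D` of points of the
circle away from which `g` is affine. -/
def IsPAff {G : Type*} [Monoid G] [MulAction G S1] (g : G) : Prop :=
  ∃ D : Finset ℝ, ∀ t₁ t₂ : ℝ, t₁ < t₂ →
    (∀ t ∈ Set.Ioo t₁ t₂, ∀ d ∈ D, toS1 t ≠ toS1 d) → AffineOnArc g t₁ t₂

/-- `g` has right derivative (slope) `a` at `x`. -/
def HasRightSlope {G : Type*} [Monoid G] [MulAction G S1] (g : G) (x : S1) (a : ℝ) : Prop :=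
  0 < a ∧ ∃ t₀ b ε : ℝ, 0 < ε ∧ toS1 t₀ = x ∧
    ∀ t ∈ Set.Ico t₀ (t₀ + ε), g • toS1 t = toS1 (a * t + b)

/-- `g` has left derivative (slope) `a` at `x`. -/
def HasLeftSlope {G : Type*} [Monoid G] [MulAction G S1] (g : G) (x : S1) (a : ℝ) : Prop :=
  0 < a ∧ ∃ t₀ b ε : ℝ, 0 < ε ∧ toS1 t₀ = x ∧
    ∀ t ∈ Set.Ioc (t₀ - ε) t₀, g • toS1 t = toS1 (a * t + b)

open Classical in
/-- The right slope of `g` at `x` (junk value `1` if it does not exist). -/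
def rightSlope {G : Type*} [Monoid G] [MulAction G S1] (g : G) (x : S1) : ℝ :=
  if h : ∃ a : ℝ, HasRightSlope g x a then h.choose else 1

open Classical in
/-- The left slope of `g` at `x` (junk value `1` if it does not exist). -/
def leftSlope {G : Type*} [Monoid G] [MulAction G S1] (g : G) (x : S1) : ℝ :=
  if h : ∃ a : ℝ, HasLeftSlope g x a then h.choose else 1

/-- The set of breakpoints of `g`: the points where the derivative of `g` is not defined
(no common one-sided slope). -/
def brkSet {G : Type*} [Monoid G] [MulAction G S1] (g : G) : Set S1 :=
  {x : S1 | ¬ ∃ a : ℝ, HasRightSlope g x a ∧ HasLeftSlope g x a}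

/-- The set `Br` of all breakpoints of elements of `G`. -/
def BrSetAll (G : Type*) [Monoid G] [MulAction G S1] : Set S1 :=
  ⋃ g : G, brkSet g

/-- The configuration `C_g(x) = log((g⁻¹)'(x⁺)) − log((g⁻¹)'(x⁻))` recording the jump of the
derivative of `g⁻¹` at `x`. -/
def config {G : Type*} [Group G] [MulAction G S1] (g : G) (x : S1) : ℝ :=
  Real.log (rightSlope g⁻¹ x) - Real.log (leftSlope g⁻¹ x)

/-- The action `g · C = C_g + S_g C` of `G` on configurations, where `(S_g C)(x) = C(g⁻¹ x)`. -/
def confAct {G : Type*} [Group G] [MulAction G S1] (g : G) (C : S1 → ℝ) : S1 → ℝ :=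
  fun x => config g x + C (g⁻¹ • x)

/-! Proximality makes some translate `g(I)` of a proper closed arc arbitrarily small, and by
minimality the translates `h⁻¹(U)` of a nonempty open set cover the circle; a Lebesgue number of
this cover bounds how small `g(I)` must be to land in one `h⁻¹(U)`, and then `hg(I) ⊆ U`.
If some `g ≠ e` fixes an open arc pointwise, its support lies in the complementary closed arc
`K`; conjugating `g` by an `h` with `h(K) ⊆ J` gives a nontrivial element supported in `J`. -/

theorem IsClosedArc.isCompact {I : Set S1} (hI : IsClosedArc I) : IsCompact I := by
  obtain ⟨a, b, -, -, rfl⟩ := hI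
  exact isCompact_Icc.image (AddCircle.continuous_mk' 1)

theorem MulAction.exists_smul_image_subset_of_isOpen {M X : Type*} [Monoid M]
    [PseudoMetricSpace X] [CompactSpace X] [MulAction M X] [ContinuousConstSMul M X]
    [MulAction.IsMinimal M X] {I : Set X}
    (hI : ∀ ε > 0, ∃ g : M, Metric.diam ((fun x : X => g • x) '' I) < ε)
    {U : Set X} (hU : IsOpen U) (hUne : U.Nonempty) :
    ∃ g : M, (fun x : X => g • x) '' I ⊆ U := by
  obtain ⟨δ, hδ, hball⟩ := lebesgue_number_lemma_of_metric isCompact_univ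
    (fun h : M => hU.preimage (continuous_const_smul h))
    (hU.iUnion_preimage_smul M hUne).ge
  obtain ⟨g, hg⟩ := hI δ hδ
  rcases I.eq_empty_or_nonempty with rfl | ⟨x₀, hx₀⟩
  · exact ⟨g, by simp⟩
  obtain ⟨h, hh⟩ := hball (g • x₀) (mem_univ _)
  refine ⟨h * g, ?_⟩
  rintro _ ⟨x, hx, rfl⟩
  have hdist : dist (g • x) (g • x₀) < δ :=
    (Metric.dist_le_diam_of_mem (Metric.isBounded_of_compactSpace)
      (mem_image_of_mem _ hx) (mem_image_of_mem _ hx₀)).trans_lt hg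
  simpa [mul_smul] using hh hdist

theorem exists_isClosedArc_compl_subset {x : S1} {V : Set S1} (hV : V ∈ 𝓝 x) :
    ∃ K : Set S1, IsClosedArc K ∧ x ∉ K ∧ Kᶜ ⊆ V := by
  obtain ⟨t, rfl⟩ := QuotientAddGroup.mk_surjective x
  obtain ⟨δ₀, hδ₀, hsub⟩ :=
    Metric.mem_nhds_iff.mp ((AddCircle.continuous_mk' 1).continuousAt.preimage_mem_nhds hV)
  set δ := min δ₀ (1 / 2)
  have hδ : 0 < δ := lt_min hδ₀ (by norm_num)
  have hδh : δ ≤ 1 / 2 := min_le_right _ _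
  refine ⟨toS1 '' Icc (t + δ) (t + 1 - δ), ⟨_, _, by linarith, by linarith, rfl⟩, ?_, ?_⟩
  · rintro ⟨s, hs, hst⟩
    have hs_eq : s = t := (AddCircle.coe_eq_coe_iff_of_mem_Ico (p := 1) (a := t)
      ⟨by linarith [hs.1], by linarith [hs.2]⟩ ⟨le_rfl, by linarith⟩).mp hst
    linarith [hs.1]
  · intro y hy
    obtain ⟨⟨s, hs⟩, rfl⟩ : ∃ s : Ioc (t - δ) (t - δ + 1), ((s : ℝ) : S1) = y :=
      ⟨_, AddCircle.coe_equivIoc⟩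
    by_cases hst : s < t + δ
    · refine hsub ?_
      rw [Metric.mem_ball, Real.dist_eq, abs_lt]
      constructor <;> linarith [hs.1, min_le_left δ₀ (1 / 2)]
    · exact absurd ⟨s, ⟨not_lt.mp hst, by linarith [hs.2]⟩, rfl⟩ hy

open Pointwise in
theorem homSupp_conj {G : Type*} [Group G] [MulAction G S1] [ContinuousConstSMul G S1]
    (g h : G) : homSupp (h * g * h⁻¹) = h • homSupp g := by
  have hfix : {x : S1 | (h * g * h⁻¹) • x ≠ x} = h • {x : S1 | g • x ≠ x} := by
    ext x
    simp only [mem_smul_set_iff_inv_smul_mem, mem_ofPred_eq, mul_smul, ne_eq,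
      smul_eq_iff_eq_inv_smul h]
  rw [homSupp, homSupp, hfix, closure_smul]

theorem contraction_into_intervals_and_small_support_general
    {G : Type} [Group G] [MulAction G S1]
    (hhomeo : ActsByHomeos G) (hmin : MinimalAct G) (hprox : ProximalAct G) :
    (∀ I J : Set S1, IsClosedArc I → IsClosedArc J → I ≠ Set.univ → J ≠ Set.univ →
      I.Nonempty → J.Nonempty → (interior I).Nonempty → (interior J).Nonempty →
      ∃ g : G, (fun x : S1 => g • x) '' I ⊆ J) ∧
    (TopNonfree G → ∀ J : Set S1, IsArc J → (interior J).Nonempty →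
      ∃ a : G, a ≠ 1 ∧ homSupp a ⊆ J) := by
  have : ContinuousConstSMul G S1 := ⟨hhomeo⟩
  have : MulAction.IsMinimal G S1 := ⟨hmin⟩
  have into_interior : ∀ {I J : Set S1}, IsClosedArc I → I ≠ univ → (interior J).Nonempty →
      ∃ g : G, (fun x : S1 => g • x) '' I ⊆ J := fun hI hIu hJ =>
    (MulAction.exists_smul_image_subset_of_isOpen (hprox _ hI hIu) isOpen_interior hJ).imp
      fun _ hg => hg.trans interior_subset
  refine ⟨fun I J hI _ hIu _ _ _ _ hJ => into_interior hI hIu hJ, ?_⟩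
  rintro ⟨g, hg, x, hx⟩ J - hJ
  obtain ⟨K, hK, hxK, hKc⟩ := exists_isClosedArc_compl_subset (isOpen_interior.mem_nhds hx)
  have hsupp : homSupp g ⊆ K := closure_minimal (fun y hy => by_contra fun hyK =>
    hy (interior_subset (s := {z : S1 | g • z = z}) (hKc hyK))) hK.isCompact.isClosed
  obtain ⟨h, hh⟩ := into_interior hK (fun hKu => hxK (hKu ▸ mem_univ x)) hJ
  refine ⟨h * g * h⁻¹, conj_eq_one_iff.not.mpr hg, ?_⟩
  rw [homSupp_conj, ← image_smul]
  exact (image_mono hsupp).trans hh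

/-- For a minimal and proximal action of a countable group `G` on `S¹` by
orientation-preserving homeomorphisms: any nonempty proper closed interval with nonempty
interior can be mapped into any other by some `g ∈ G`; if moreover the action is topologically
nonfree then every nontrivial interval contains the support of some nontrivial element. -/
theorem contraction_into_intervals_and_small_support
    {G : Type} [Group G] [Countable G] [MulAction G S1]
    (hhomeo : ActsByHomeos G) (hfaith : FaithfulAct G) (horient : ∀ g : G, OrientPres g)
    (hmin : MinimalAct G) (hprox : ProximalAct G) :
    (∀ I J : Set S1, IsClosedArc I → IsClosedArc J → I ≠ Set.univ → J ≠ Set.univ →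
      I.Nonempty → J.Nonempty → (interior I).Nonempty → (interior J).Nonempty →
      ∃ g : G, (fun x : S1 => g • x) '' I ⊆ J) ∧
    (TopNonfree G → ∀ J : Set S1, IsArc J → (interior J).Nonempty →
      ∃ a : G, a ≠ 1 ∧ homSupp a ⊆ J) :=
  contraction_into_intervals_and_small_support_general hhomeo hmin hprox

end
end

section
/- Let G be a countable subgroup of Homeo₊(S¹) acting minimally and proximally on S¹, let μ be a nondegenerate probability measure on G, let a ∈ G∖{e_G} be such that S¹∖supp(a) has nonempty interior, and let J ⊊ S¹ be the smallest closed interval containing supp(a). Fix a collection q = (x, i₁,…,i_k) of length n and two trajectories (y₁,…,yₙ), (ỹ₁,…,ỹₙ) ∈ T^{a,e_G}(q). Then for each 1 ≤ r ≤ k the following are equivalent: (1) for all 0 ≤ l < i_r − 1 the interval y_{i_r−1}(J) dominates y_l(J); (2) for all 0 ≤ l < i_r − 1 the interval ỹ_{i_r−1}(J) dominates ỹ_l(J). Moreover, whenever these conditions hold for all 1 ≤ r ≤ k, one has y_{i_r−1}(J) = ỹ_{i_r−1}(J) for all r, and the set of trajectories T^{a,e_G}(q) is satisfactory. -/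
open MeasureTheory Filter Topology Set

noncomputable section

/-!
For two trajectories `y, ỹ` of `T^{a,e}(q)` put `d_l = ỹ_l y_l⁻¹`. At a time of `q` both
increments lie in `{a, e}`, so `d_l = d_{l-1} · y_{l-1} c y_{l-1}⁻¹` with `c` fixing every point
outside `J`; such a conjugate preserves every set that contains `y_{l-1}(J)` or is disjoint from
it. Hence `d_{i-1}` preserves `y_{i-1}(J)` as soon as this interval dominates all earlier
translates `y_l(J)`: this transfers the domination condition from `y` to `ỹ` and gives
`ỹ_{i-1}(J) = y_{i-1}(J)`.

Two distinct trajectories with the same endpoint branch for the last time at a time `i` of `q`,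
say with `ỹ_{i-1} = y_{i-1} a`. Then `d_{i-1} = y_{i-1} a y_{i-1}⁻¹` fixes every point `y_{i-1} x`
lying outside the translates `y_{j-1}(J)`, `j ≤ i - 1`. Since `supp(a)` misses a point of the
circle, it lies in a closed arc whose left endpoint belongs to `supp(a)`; by minimality this arc
contains `J`, so that endpoint `p` lies in `J` but not in its interior. Hence `p` avoids the
finitely many closed translates `y_{i-1}⁻¹ y_{j-1}(J)`, all dominated by `J`, and so do the points
moved by `a` close to `p`; such a point `x` contradicts `a x = x`.
-/

open MulAction Pointwise

section FixingSubgroup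

variable {G α : Type*} [Group G] [MulAction G α] {c g : G} {J M : Set α}

theorem smul_set_eq_of_mem_fixingSubgroup_compl (hc : c ∈ fixingSubgroup G Jᶜ)
    (hM : J ⊆ M ∨ Disjoint M J) : c • M = M := by
  rw [mem_fixingSubgroup_compl_iff_movedBy_subset] at hc
  rcases hM with hJM | hMJ
  · exact set_mem_fixedBy_of_movedBy_subset (hc.trans hJM)
  · exact set_mem_fixedBy_of_subset_fixedBy
      (hMJ.subset_compl_right.trans (compl_subset_comm.mp hc))

theorem conj_mem_stabilizer_of_mem_fixingSubgroup_compl (hc : c ∈ fixingSubgroup G Jᶜ)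
    (hM : g • J ⊆ M ∨ Disjoint M (g • J)) : g * c * g⁻¹ ∈ stabilizer G M := by
  refine mem_stabilizer_iff.mpr (smul_set_eq_of_mem_fixingSubgroup_compl ?_ hM)
  exact Set.conj_mem_fixingSubgroup smul_set_compl hc

end FixingSubgroup

theorem exists_ne_and_succ_eq {β : Type*} {f g : ℕ → β} {l n : ℕ} (hln : l ≤ n) (hl : f l ≠ g l)
    (hn : f n = g n) : ∃ m < n, f m ≠ g m ∧ f (m + 1) = g (m + 1) := by
  by_contra! h
  exact hl <| Nat.decreasingInduction (motive := fun k _ => f k = g k)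
    (fun k hk hsucc => by_contra fun hne => h k hk hne hsucc) hn hln

namespace trajSet

variable {G : Type*} [Group G] {S : Set G} {n : ℕ} {a b : G} {q : Collection G S n}
  {u v : ℕ → G} {l : ℕ}

theorem inv_mul_succ_eq_or_eq (hu : u ∈ trajSet a b q) (hl : l < n) (hI : l + 1 ∈ q.I) :
    (u l)⁻¹ * u (l + 1) = a ∨ (u l)⁻¹ * u (l + 1) = b := by
  simpa only [inv_mul_eq_iff_eq_mul, Nat.add_sub_cancel] using (hu.2.1 (l + 1) l.succ_pos hl).1 hI

theorem inv_mul_succ_eq_x (hu : u ∈ trajSet a b q) (hl : l < n) (hI : l + 1 ∉ q.I) :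
    (u l)⁻¹ * u (l + 1) = q.x (l + 1) := by
  simpa only [inv_mul_eq_iff_eq_mul, Nat.add_sub_cancel] using (hu.2.1 (l + 1) l.succ_pos hl).2 hI

theorem mul_inv_mem_stabilizer {α : Type*} [MulAction G α] {J M : Set α}
    (ha : a ∈ fixingSubgroup G Jᶜ) (hb : b ∈ fixingSubgroup G Jᶜ)
    (hu : u ∈ trajSet a b q) (hv : v ∈ trajSet a b q) :
    ∀ l ≤ n, (∀ j ∈ q.I, j ≤ l → u (j - 1) • J ⊆ M ∨ Disjoint M (u (j - 1) • J)) →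
      v l * (u l)⁻¹ ∈ stabilizer G M
  | 0, _, _ => by simp [hu.1, hv.1]
  | l + 1, hl, hM => by
    have hstep : v (l + 1) * (u (l + 1))⁻¹ =
        v l * (u l)⁻¹ * (u l * ((v l)⁻¹ * v (l + 1) * ((u l)⁻¹ * u (l + 1))⁻¹) * (u l)⁻¹) := by
      group
    rw [hstep]
    refine mul_mem (mul_inv_mem_stabilizer ha hb hu hv l (by omega)
      fun j hj hjl => hM j hj (by omega)) ?_
    by_cases hI : l + 1 ∈ q.I
    · have hab : ∀ x, x = a ∨ x = b → x ∈ fixingSubgroup G Jᶜ := by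
        rintro x (rfl | rfl) <;> assumption
      exact conj_mem_stabilizer_of_mem_fixingSubgroup_compl
        (mul_mem (hab _ (inv_mul_succ_eq_or_eq hv hl hI))
          (inv_mem (hab _ (inv_mul_succ_eq_or_eq hu hl hI))))
        (by simpa using hM (l + 1) hI le_rfl)
    · rw [inv_mul_succ_eq_x hu hl hI, inv_mul_succ_eq_x hv hl hI, mul_inv_cancel, mul_one,
        mul_inv_cancel]
      exact one_mem _

theorem exists_eq_mul_of_ne (hu : u ∈ trajSet a 1 q) (hv : v ∈ trajSet a 1 q) (huv : u ≠ v)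
    (hn : u n = v n) : ∃ m, m + 1 ∈ q.I ∧ (v m = u m * a ∨ u m = v m * a) := by
  obtain ⟨l, hl, hne⟩ : ∃ l ≤ n, u l ≠ v l := by
    by_contra! h
    exact huv (funext fun l => by
      rcases le_or_gt l n with hl | hl
      · exact h l hl
      · rw [hu.2.2 l hl.le, hv.2.2 l hl.le, hn])
  obtain ⟨m, hm, hne, hsucc⟩ := exists_ne_and_succ_eq hl hne hn
  have hstep : u m * ((u m)⁻¹ * u (m + 1)) = v m * ((v m)⁻¹ * v (m + 1)) := by
    simp only [mul_inv_cancel_left, hsucc]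
  by_cases hI : m + 1 ∈ q.I
  · refine ⟨m, hI, ?_⟩
    rcases inv_mul_succ_eq_or_eq hu hm hI with hx | hx <;>
      rcases inv_mul_succ_eq_or_eq hv hm hI with hy | hy <;>
      simp only [hx, hy, mul_one] at hstep
    exacts [absurd (mul_right_cancel hstep) hne, .inl hstep.symm, .inr hstep, absurd hstep hne]
  · rw [inv_mul_succ_eq_x hu hm hI, inv_mul_succ_eq_x hv hm hI] at hstep
    exact absurd (mul_right_cancel hstep) hne

end trajSet

theorem Dominates.subset_or_disjoint {M N : Set S1} (h : Dominates M N) :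
    N ⊆ M ∨ Disjoint M N :=
  h.symm.imp_left (·.trans interior_subset)

theorem Dominates.smul {G : Type*} [Group G] [MulAction G S1] [ContinuousConstSMul G S1]
    {M N : Set S1} (g : G) (h : Dominates M N) : Dominates (g • M) (g • N) := by
  rwa [Dominates, interior_smul, smul_set_subset_smul_set_iff, disjoint_smul_set]

theorem trajSet.dominates_transfer {G : Type*} [Group G] [MulAction G S1]
    [ContinuousConstSMul G S1] {S : Set G} {n : ℕ} {a b : G} {q : Collection G S n}
    {u v : ℕ → G} {J : Set S1} (ha : a ∈ fixingSubgroup G Jᶜ) (hb : b ∈ fixingSubgroup G Jᶜ)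
    (hu : u ∈ trajSet a b q) (hv : v ∈ trajSet a b q) {i : ℕ} (hi : i ∈ q.I)
    (h : ∀ l < i - 1, Dominates (u (i - 1) • J) (u l • J)) :
    v (i - 1) • J = u (i - 1) • J ∧ ∀ l < i - 1, Dominates (v (i - 1) • J) (v l • J) := by
  have hstab : ∀ l ≤ i - 1, (v l * (u l)⁻¹) • u (i - 1) • J = u (i - 1) • J := fun l hl =>
    mul_inv_mem_stabilizer ha hb hu hv l (by have := q.hI i hi; omega) fun j hj hjl =>
      (h (j - 1) (by have := q.hI j hj; omega)).subset_or_disjoint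
  have hv_eq : ∀ l, v l • J = (v l * (u l)⁻¹) • u l • J := fun l => by
    rw [smul_smul, inv_mul_cancel_right]
  have hEq : v (i - 1) • J = u (i - 1) • J := (hv_eq _).trans (hstab _ le_rfl)
  refine ⟨hEq, fun l hl => ?_⟩
  have := (h l hl).smul (v l * (u l)⁻¹)
  rwa [hstab l hl.le, ← hv_eq, ← hEq] at this

theorem exists_mem_forall_notMem_of_mem_closure {X ι : Type*} [TopologicalSpace X] {s : Set X}
    {p : X} (hp : p ∈ closure s) (F : Finset ι) {K : ι → Set X} (hK : ∀ i ∈ F, IsClosed (K i))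
    (hpK : ∀ i ∈ F, p ∉ K i) : ∃ x ∈ s, ∀ i ∈ F, x ∉ K i := by
  obtain ⟨x, hxK, hxs⟩ := mem_closure_iff.mp hp _ (isClosed_biUnion_finset hK).isOpen_compl
    (by simpa using hpK)
  exact ⟨x, hxs, by simpa using hxK⟩

theorem continuous_toS1 : Continuous toS1 := continuous_quotient_mk'

theorem IsClosedArc.isClosed {J : Set S1} (hJ : IsClosedArc J) : IsClosed J := by
  obtain ⟨s, t, -, -, rfl⟩ := hJ
  exact (isCompact_Icc.image continuous_toS1).isClosed

theorem toS1_notMem_interior_image_Icc {s t : ℝ} (hts : t < s + 1) :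
    toS1 s ∉ interior (toS1 '' Icc s t) := by
  intro hs
  have hnhds : toS1 ⁻¹' interior (toS1 '' Icc s t) ∈ 𝓝[<] s :=
    nhdsWithin_le_nhds ((isOpen_interior.preimage continuous_toS1).mem_nhds hs)
  obtain ⟨r, hr, hrt, hrs⟩ :=
    Filter.nonempty_of_mem (Filter.inter_mem hnhds (Ioo_mem_nhdsLT (by linarith : t - 1 < s)))
  obtain ⟨r', hr', hrr'⟩ := interior_subset hr
  have := (AddCircle.coe_eq_coe_iff_of_mem_Ico (p := (1 : ℝ)) (a := r)
    ⟨by linarith [hr'.1], by linarith [hr'.2]⟩ ⟨le_rfl, lt_add_one r⟩).mp hrr'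
  linarith [hr'.1]

theorem IsClosed.exists_subset_image_Icc {S : Set S1} (hS : IsClosed S) (hne : S.Nonempty)
    {c : ℝ} (hc : toS1 c ∉ S) :
    ∃ s t : ℝ, s ≤ t ∧ t < s + 1 ∧ toS1 s ∈ S ∧ S ⊆ toS1 '' Icc s t := by
  set Q := Icc c (c + 1) ∩ toS1 ⁻¹' S
  have hQ : IsClosed Q := isClosed_Icc.inter (hS.preimage continuous_toS1)
  have hrep : ∀ x ∈ S, ∃ r ∈ Q, toS1 r = x := fun x hx =>
    ⟨AddCircle.equivIco 1 c x,
      ⟨Ico_subset_Icc_self (AddCircle.equivIco 1 c x).2, by simpa [toS1, AddCircle.coe_equivIco]⟩,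
      AddCircle.coe_equivIco⟩
  have hQne : Q.Nonempty := let ⟨x, hx⟩ := hne; let ⟨r, hr, _⟩ := hrep x hx; ⟨r, hr⟩
  have hbdd : BddBelow Q := ⟨c, fun r hr => hr.1.1⟩
  have hbdd' : BddAbove Q := ⟨c + 1, fun r hr => hr.1.2⟩
  have hsQ := hQ.csInf_mem hQne hbdd
  have htQ := hQ.csSup_mem hQne hbdd'
  have hcs : c < sInf Q := hsQ.1.1.lt_of_ne fun h => hc (h ▸ hsQ.2)
  have htc : sSup Q < c + 1 := htQ.1.2.lt_of_ne fun h =>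
    hc (by simpa [toS1, h] using htQ.2)
  refine ⟨sInf Q, sSup Q, csInf_le hbdd htQ, by linarith, hsQ.2, fun x hx => ?_⟩
  obtain ⟨r, hr, rfl⟩ := hrep x hx
  exact ⟨r, ⟨csInf_le hbdd hr, le_csSup hbdd' hr⟩, rfl⟩

theorem exists_mem_homSupp_notMem_interior {G : Type*} [Monoid G] [MulAction G S1] {a : G}
    (hmoved : ∃ x : S1, a • x ≠ x) (hacompl : (homSupp a)ᶜ.Nonempty) {J : Set S1}
    (hJmin : ∀ J' : Set S1, IsClosedArc J' → homSupp a ⊆ J' → J ⊆ J') :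
    ∃ p ∈ homSupp a, p ∉ interior J := by
  obtain ⟨x, hx⟩ := hmoved
  obtain ⟨_, hc⟩ := hacompl
  obtain ⟨c, rfl⟩ := QuotientAddGroup.mk_surjective ‹S1›
  obtain ⟨s, t, hst, hts, hs, hsub⟩ :=
    isClosed_closure.exists_subset_image_Icc ⟨x, subset_closure hx⟩ (c := c) hc
  exact ⟨toS1 s, hs, fun h => toS1_notMem_interior_image_Icc hts
    (interior_mono (hJmin _ ⟨s, t, hst, hts.le, rfl⟩ hsub) h)⟩

section Satisfactory

variable {G : Type*} [Group G] [MulAction G S1] [ContinuousConstSMul G S1] {S : Set G} {n : ℕ}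
  {a : G} {q : Collection G S n} {J : Set S1} {p : S1}

theorem trajSet.ne_mul_of_dominates (ha : a ∈ fixingSubgroup G Jᶜ) (hJ : IsClosed J)
    (hpa : p ∈ homSupp a) (hpJ : p ∈ J) (hpint : p ∉ interior J) {u v : ℕ → G}
    (hu : u ∈ trajSet a 1 q) (hv : v ∈ trajSet a 1 q) {m : ℕ} (hm : m + 1 ∈ q.I)
    (hdom : ∀ l < m, Dominates (u m • J) (u l • J)) : v m ≠ u m * a := by
  intro hvm
  obtain ⟨x, hxa, hxK⟩ := exists_mem_forall_notMem_of_mem_closure hpa (q.I.filter (· ≤ m))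
    (K := fun j => ((u m)⁻¹ * u (j - 1)) • J) (fun j _ => hJ.smul _) fun j hj hpK => by
      have hj := Finset.mem_filter.mp hj
      have hdomJ := (hdom (j - 1) (by have := q.hI j hj.1; omega)).smul (u m)⁻¹
      rw [inv_smul_smul, ← mul_smul] at hdomJ
      rcases hdomJ with hdisj | hsub
      · exact hdisj.notMem_of_mem_left hpJ hpK
      · exact hpint (hsub hpK)
  have hfix := trajSet.mul_inv_mem_stabilizer (M := {u m • x}) ha (one_mem _) hu hv m
    (by have := q.hI _ hm; omega) fun j hj hjm => .inr <| disjoint_singleton_left.mpr fun h =>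
      hxK j (Finset.mem_filter.mpr ⟨hj, hjm⟩) (by
        rwa [mul_smul, ← smul_mem_smul_set_iff (a := u m), smul_inv_smul])
  rw [mem_stabilizer_iff, smul_set_singleton, singleton_eq_singleton_iff, hvm, mul_smul,
    mul_smul, inv_smul_smul] at hfix
  exact hxa (smul_left_cancel _ hfix)

theorem satisfactory_of_forall_dominates (ha : a ∈ fixingSubgroup G Jᶜ) (hJ : IsClosed J)
    (hpa : p ∈ homSupp a) (hpJ : p ∈ J) (hpint : p ∉ interior J)
    (hdom : ∀ u ∈ trajSet a 1 q, ∀ i ∈ q.I, ∀ l < i - 1, Dominates (u (i - 1) • J) (u l • J)) :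
    Satisfactory a 1 q := by
  intro u hu v hv huv hn
  have hdom' : ∀ {w}, w ∈ trajSet a 1 q → ∀ {m}, m + 1 ∈ q.I →
      ∀ l < m, Dominates (w m • J) (w l • J) := fun hw m hm => by
    simpa using hdom _ hw _ hm
  obtain ⟨m, hm, hvm | hum⟩ := trajSet.exists_eq_mul_of_ne hu hv huv hn
  · exact trajSet.ne_mul_of_dominates ha hJ hpa hpJ hpint hu hv hm (hdom' hu hm) hvm
  · exact trajSet.ne_mul_of_dominates ha hJ hpa hpJ hpint hv hu hm (hdom' hv hm) hum

end Satisfactory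

theorem good_collections_lemma_general
    {G : Type} [Group G] [MulAction G S1]
    (hhomeo : ActsByHomeos G) (hfaith : FaithfulAct G)
    (μ : PMF G)
    (a : G) (ha : a ≠ 1) (hacompl : (interior ((homSupp a)ᶜ)).Nonempty)
    (J : Set S1) (hJarc : IsClosedArc J) (hJsupp : homSupp a ⊆ J)
    (hJmin : ∀ J' : Set S1, IsClosedArc J' → homSupp a ⊆ J' → J ⊆ J')
    {n : ℕ} (q : Collection G μ.support n)
    (y ytilde : ℕ → G) (hy : y ∈ trajSet a 1 q) (hyt : ytilde ∈ trajSet a 1 q) :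
    (∀ i ∈ q.I,
      ((∀ l, l < i - 1 →
          Dominates ((fun z : S1 => y (i - 1) • z) '' J) ((fun z : S1 => y l • z) '' J)) ↔
        (∀ l, l < i - 1 →
          Dominates ((fun z : S1 => ytilde (i - 1) • z) '' J)
            ((fun z : S1 => ytilde l • z) '' J)))) ∧
    ((∀ i ∈ q.I, ∀ l, l < i - 1 →
        Dominates ((fun z : S1 => y (i - 1) • z) '' J) ((fun z : S1 => y l • z) '' J)) →
      (∀ i ∈ q.I,
        (fun z : S1 => y (i - 1) • z) '' J = (fun z : S1 => ytilde (i - 1) • z) '' J) ∧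
      Satisfactory a 1 q) := by
  have : ContinuousConstSMul G S1 := ⟨hhomeo⟩
  have ha' : a ∈ fixingSubgroup G Jᶜ :=
    (mem_fixingSubgroup_compl_iff_movedBy_subset G).mpr fun x hx => hJsupp (subset_closure hx)
  have transfer {u v : ℕ → G} (hu : u ∈ trajSet a 1 q) (hv : v ∈ trajSet a 1 q) {i : ℕ}
      (hi : i ∈ q.I) := trajSet.dominates_transfer ha' (one_mem _) hu hv hi
  refine ⟨fun i hi => ⟨fun h => (transfer hy hyt hi h).2, fun h => (transfer hyt hy hi h).2⟩,
    fun hdom => ⟨fun i hi => (transfer hy hyt hi (hdom i hi)).1.symm, ?_⟩⟩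
  obtain ⟨p, hpa, hpint⟩ := exists_mem_homSupp_notMem_interior
    (not_forall.mp (mt (hfaith a) ha)) (hacompl.mono interior_subset) hJmin
  exact satisfactory_of_forall_dominates ha' hJarc.isClosed hpa (hJsupp hpa) hpint
    fun u hu i hi => (transfer hy hu hi (hdom i hi)).2

/-- (Lemma on good collections.) Fix a collection `q` and two trajectories
`y, ỹ ∈ T^{a,e}(q)`. For each time `i ∈ I` of `q`, the domination condition for `y` at `i` is
equivalent to the one for `ỹ`; whenever these conditions hold for all times of `q`, the
translates `y_{i-1}(J)` and `ỹ_{i-1}(J)` coincide and `T^{a,e}(q)` is satisfactory. -/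
theorem good_collections_lemma
    {G : Type} [Group G] [Countable G] [MulAction G S1]
    [MeasurableSpace G] [MeasurableSingletonClass G]
    (hhomeo : ActsByHomeos G) (hfaith : FaithfulAct G) (horient : ∀ g : G, OrientPres g)
    (hmin : MinimalAct G) (hprox : ProximalAct G)
    (μ : PMF G) (hnd : Nondeg μ)
    (a : G) (ha : a ≠ 1) (hacompl : (interior ((homSupp a)ᶜ)).Nonempty)
    (J : Set S1) (hJarc : IsClosedArc J) (hJsupp : homSupp a ⊆ J)
    (hJmin : ∀ J' : Set S1, IsClosedArc J' → homSupp a ⊆ J' → J ⊆ J')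
    {n : ℕ} (q : Collection G μ.support n)
    (y ytilde : ℕ → G) (hy : y ∈ trajSet a 1 q) (hyt : ytilde ∈ trajSet a 1 q) :
    (∀ i ∈ q.I,
      ((∀ l, l < i - 1 →
          Dominates ((fun z : S1 => y (i - 1) • z) '' J) ((fun z : S1 => y l • z) '' J)) ↔
        (∀ l, l < i - 1 →
          Dominates ((fun z : S1 => ytilde (i - 1) • z) '' J)
            ((fun z : S1 => ytilde l • z) '' J)))) ∧
    ((∀ i ∈ q.I, ∀ l, l < i - 1 →
        Dominates ((fun z : S1 => y (i - 1) • z) '' J) ((fun z : S1 => y l • z) '' J)) →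
      (∀ i ∈ q.I,
        (fun z : S1 => y (i - 1) • z) '' J = (fun z : S1 => ytilde (i - 1) • z) '' J) ∧
      Satisfactory a 1 q) :=
  good_collections_lemma_general hhomeo hfaith μ a ha hacompl J hJarc hJsupp hJmin q y ytilde hy hyt

end
end
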